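/- arXiv:2106.05112 — 9 statements merged into one kernel-verified Lean document; each statement's English description precedes it below -/
import Mathlib

section
/- Fix y ≥ y₀. The map z ↦ η(z,y) is strictly decreasing on (y,∞); indeed its derivative satisfies ∂η/∂z (z,y) = [Ĝ'(z)(z−y) − (Ĝ(z) − R̂(y))]/(z−y)² < 0 for every z > y. -/
open Set Filter

/-- for fixed `y ≥ y₀`, the map `z ↦ η(z,y)` is strictly decreasing on `(y,∞)`,
with derivative `(Ĝ'(z)(z−y) − (Ĝ(z) − R̂(y)))/(z−y)² < 0` for every `z > y`. -/
theorem stmt_0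
    (y₀ : ℝ) (hy₀ : 0 < y₀)
    (G R G' R' : ℝ → ℝ)
    (hGdiff : ∀ z ∈ Ioi (0 : ℝ), HasDerivAt G (G' z) z)
    (hGconc : ConcaveOn ℝ (Ioi (0 : ℝ)) G)
    (hGpos : ∀ z ∈ Ioi (0 : ℝ), 0 < G z)
    (hGlim : Tendsto (fun z => G z / z) atTop (nhds 0))
    (hRdiff : ∀ y ∈ Ici y₀, HasDerivAt R (R' y) y)
    (hR'pos : ∀ y ∈ Ici y₀, 0 < R' y)
    (hGR : ∀ y ∈ Ici y₀, R y < G y)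
    (η : ℝ → ℝ → ℝ)
    (hη : ∀ z y, η z y = (G z - R y) / (z - y) - R' y)
    (y : ℝ) (hy : y₀ ≤ y) :
    StrictAntiOn (fun z => η z y) (Ioi y) ∧
      ∀ z, y < z →
        HasDerivAt (fun z' => η z' y)
          ((G' z * (z - y) - (G z - R y)) / (z - y) ^ 2) z ∧
        (G' z * (z - y) - (G z - R y)) / (z - y) ^ 2 < 0 := by
  have hypos : 0 < y := lt_of_lt_of_le hy₀ hy
  have key : ∀ z, y < z →
      HasDerivAt (fun z' => η z' y)
        ((G' z * (z - y) - (G z - R y)) / (z - y) ^ 2) z ∧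
      (G' z * (z - y) - (G z - R y)) / (z - y) ^ 2 < 0 := by
    intro z hz
    have hzpos : (0:ℝ) < z := hypos.trans hz
    have hzy : (0:ℝ) < z - y := by linarith
    constructor
    · have hG : HasDerivAt G (G' z) z := hGdiff z hzpos
      have h1 : HasDerivAt (fun z' => G z' - R y) (G' z) z := hG.sub_const _
      have h2 : HasDerivAt (fun z' : ℝ => z' - y) 1 z := (hasDerivAt_id z).sub_const _
      have h3 : HasDerivAt (fun z' => (G z' - R y) / (z' - y))
          ((G' z * (z - y) - (G z - R y) * 1) / (z - y) ^ 2) z :=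
        h1.div h2 (ne_of_gt hzy)
      have h4 := h3.sub_const (R' y)
      have : ((G' z * (z - y) - (G z - R y) * 1) / (z - y) ^ 2)
          = (G' z * (z - y) - (G z - R y)) / (z - y) ^ 2 := by ring
      rw [this] at h4
      exact h4.congr_of_eventuallyEq (by filter_upwards with w using (hη w y))
    · -- derivative negativity
      have hslope : G' z ≤ (G z - G y) / (z - y) := by
        have htend : Tendsto (slope G z) (nhdsWithin z (Ioi z)) (nhds (G' z)) :=
          (hasDerivAt_iff_tendsto_slope.mp (hGdiff z hzpos)).mono_left
            (nhdsWithin_mono z fun w hw => ne_of_gt hw)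
        refine le_of_tendsto htend ?_
        filter_upwards [self_mem_nhdsWithin] with w hw
        have hwz : z < w := hw
        have := hGconc.slope_anti_adjacent (x := y) (y := z) (z := w)
          hypos (hzpos.trans hwz) hz hwz
        simpa [slope_def_field] using this
      have hGy : R y < G y := hGR y hy
      have hnum : G' z * (z - y) ≤ G z - G y := (le_div_iff₀ hzy).mp hslope
      have : G' z * (z - y) - (G z - R y) < 0 := by linarith
      exact div_neg_of_neg_of_pos this (pow_pos hzy 2)
  refine ⟨?_, key⟩
  refine strictAntiOn_of_deriv_neg (convex_Ioi y) ?_ ?_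
  · intro x hx
    exact ((key x hx).1.continuousAt).continuousWithinAt
  · intro x hx
    rw [interior_Ioi] at hx
    rw [(key x hx).1.deriv]
    exact (key x hx).2
end

section
/- For every y ≥ y₀ there exists a unique z_y ∈ (y,∞) such that η(z_y, y) = 0; moreover η(z,y) > 0 for all z ∈ (y, z_y) and η(z,y) < 0 for all z > z_y. -/
open Set Filter

/-!
Fix `y`. Then `η(z, y) = h(z) / (z - y)` for the concave function
`h(z) = G(z) - R(y) - R'(y) (z - y)`, which is positive at `z = y` (as `R(y) < G(y)`) and
negative for large `z` (as `G` is sublinear and `R'(y) > 0`). By the intermediate value theorem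
`h` vanishes somewhere in `(y, ∞)`, and a concave function that is positive at `y` changes sign
at most once to the right of `y`.
-/

theorem ConcaveOn.sub_affine {s : Set ℝ} {G : ℝ → ℝ} (hG : ConcaveOn ℝ s G) (a c : ℝ) :
    ConcaveOn ℝ s (fun z => G z - (a + c * z)) := by
  refine ((hG.add (LinearMap.concaveOn (-c • LinearMap.id) hG.1)).add_const (-a)).congr ?_
  intro z _
  simp only [Pi.add_apply, LinearMap.smul_apply, LinearMap.id_apply, smul_eq_mul]
  ring

theorem eventually_lt_affine_of_div_tendsto_zero {G : ℝ → ℝ}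
    (hG : Tendsto (fun z => G z / z) atTop (nhds 0)) {c : ℝ} (hc : 0 < c) (a : ℝ) :
    ∀ᶠ z in atTop, G z < a + c * z := by
  have hlim : Tendsto (fun z => G z / z - a * z⁻¹) atTop (nhds (0 - a * 0)) :=
    hG.sub (tendsto_inv_atTop_zero.const_mul a)
  rw [mul_zero, sub_zero] at hlim
  filter_upwards [hlim.eventually_lt_const hc, eventually_gt_atTop 0] with z hz hz0
  rw [← div_eq_mul_inv, ← sub_div, div_lt_iff₀ hz0] at hz
  linarith

section ConcaveSign

variable {s : Set ℝ} {h : ℝ → ℝ}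

theorem ConcaveOn.pos_of_mem_Ioo (hh : ConcaveOn ℝ s h) {a b z : ℝ} (ha : a ∈ s) (hb : b ∈ s)
    (hz : z ∈ Ioo a b) (hpa : 0 < h a) (hpb : 0 ≤ h b) : 0 < h z := by
  by_contra! hz0
  have hslope := hh.slope_anti_adjacent ha hb hz.1 hz.2
  have hright : 0 ≤ (h b - h z) / (b - z) := div_nonneg (by linarith) (sub_pos.2 hz.2).le
  have hleft : (h z - h a) / (z - a) < 0 := div_neg_of_neg_of_pos (by linarith) (sub_pos.2 hz.1)
  linarith

theorem ConcaveOn.neg_of_lt (hh : ConcaveOn ℝ s h) {a b z : ℝ} (ha : a ∈ s) (hz : z ∈ s)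
    (hab : a < b) (hbz : b < z) (hpa : 0 < h a) (hb : h b ≤ 0) : h z < 0 := by
  have hslope := hh.slope_anti_adjacent ha hz hab hbz
  have hleft : (h b - h a) / (b - a) < 0 := div_neg_of_neg_of_pos (by linarith) (sub_pos.2 hab)
  have hright := (div_lt_iff₀ (sub_pos.2 hbz)).1 (hslope.trans_lt hleft)
  linarith

theorem ConcaveOn.exists_sign_change (hh : ConcaveOn ℝ s h) {a b : ℝ}
    (hcont : ContinuousOn h (Icc a b)) (hs : Ici a ⊆ s) (hab : a < b) (hpa : 0 < h a)
    (hnb : h b < 0) :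
    ∃ z, a < z ∧ h z = 0 ∧ (∀ x ∈ Ioo a z, 0 < h x) ∧ (∀ x, z < x → h x < 0) ∧
      ∀ x, a < x → h x = 0 → x = z := by
  obtain ⟨z, ⟨haz, -⟩, hz0⟩ := intermediate_value_Ioo' hab.le hcont ⟨hnb, hpa⟩
  have hpos : ∀ x ∈ Ioo a z, 0 < h x := fun x hx =>
    hh.pos_of_mem_Ioo (hs self_mem_Ici) (hs haz.le) hx hpa hz0.ge
  have hneg : ∀ x, z < x → h x < 0 := fun x hx =>
    hh.neg_of_lt (hs self_mem_Ici) (hs (haz.trans hx).le) haz hx hpa hz0.le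
  refine ⟨z, haz, hz0, hpos, hneg, fun x hax hx0 => ?_⟩
  rcases lt_trichotomy x z with hxz | rfl | hzx
  · exact absurd hx0 (hpos x ⟨hax, hxz⟩).ne'
  · rfl
  · exact absurd hx0 (hneg x hzx).ne

end ConcaveSign

theorem stmt_1_general
    (y₀ : ℝ) (hy₀ : 0 < y₀)
    (G R R' : ℝ → ℝ)
    (hGconc : ConcaveOn ℝ (Ioi (0 : ℝ)) G)
    (hGlim : Tendsto (fun z => G z / z) atTop (nhds 0))
    (hR'pos : ∀ y ∈ Ici y₀, 0 < R' y)
    (hGR : ∀ y ∈ Ici y₀, R y < G y)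
    (η : ℝ → ℝ → ℝ)
    (hη : ∀ z y, η z y = (G z - R y) / (z - y) - R' y) :
    ∀ y ∈ Ici y₀, ∃ zy : ℝ, y < zy ∧ η zy y = 0 ∧
      (∀ z ∈ Ioo y zy, 0 < η z y) ∧
      (∀ z, zy < z → η z y < 0) ∧
      (∀ z', y < z' → η z' y = 0 → z' = zy) := by
  intro y hy
  have hy0 : 0 < y := hy₀.trans_le hy
  set h : ℝ → ℝ := fun z => G z - (R y - R' y * y + R' y * z) with h_def
  have hconc : ConcaveOn ℝ (Ioi 0) h := hGconc.sub_affine _ _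
  have hη_eq : ∀ z, y < z → η z y = h z / (z - y) := by
    intro z hz
    rw [hη, h_def]
    field_simp [(sub_pos.2 hz).ne']
    ring
  obtain ⟨b, hb, hyb⟩ := ((eventually_lt_affine_of_div_tendsto_zero hGlim (hR'pos y hy)
    (R y - R' y * y)).and (eventually_gt_atTop y)).exists
  have hhy : 0 < h y := by simp only [h_def]; linarith [hGR y hy]
  obtain ⟨z, hyz, hz0, hpos, hneg, huniq⟩ := hconc.exists_sign_change
    ((hconc.continuousOn isOpen_Ioi).mono fun x hx => hy0.trans_le hx.1)
    (fun x hx => hy0.trans_le hx) hyb hhy (sub_neg.2 hb)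
  refine ⟨z, hyz, ?_, fun x hx => ?_, fun x hx => ?_, fun x hx hx0 => huniq x hx ?_⟩
  · rw [hη_eq z hyz, hz0, zero_div]
  · rw [hη_eq x hx.1]
    exact div_pos (hpos x hx) (sub_pos.2 hx.1)
  · rw [hη_eq x (hyz.trans hx)]
    exact div_neg_of_neg_of_pos (hneg x hx) (sub_pos.2 (hyz.trans hx))
  · rw [hη_eq x hx, div_eq_zero_iff] at hx0
    exact hx0.resolve_right (sub_pos.2 hx).ne'

/-- for every `y ≥ y₀` there is a unique `z_y ∈ (y,∞)` with `η(z_y,y) = 0`;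
moreover `η(z,y) > 0` on `(y, z_y)` and `η(z,y) < 0` on `(z_y, ∞)`. -/
theorem stmt_1
    (y₀ : ℝ) (hy₀ : 0 < y₀)
    (G R G' R' : ℝ → ℝ)
    (hGdiff : ∀ z ∈ Ioi (0 : ℝ), HasDerivAt G (G' z) z)
    (hGconc : ConcaveOn ℝ (Ioi (0 : ℝ)) G)
    (hGpos : ∀ z ∈ Ioi (0 : ℝ), 0 < G z)
    (hGlim : Tendsto (fun z => G z / z) atTop (nhds 0))
    (hRdiff : ∀ y ∈ Ici y₀, HasDerivAt R (R' y) y)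
    (hR'pos : ∀ y ∈ Ici y₀, 0 < R' y)
    (hGR : ∀ y ∈ Ici y₀, R y < G y)
    (η : ℝ → ℝ → ℝ)
    (hη : ∀ z y, η z y = (G z - R y) / (z - y) - R' y) :
    ∀ y ∈ Ici y₀, ∃ zy : ℝ, y < zy ∧ η zy y = 0 ∧
      (∀ z ∈ Ioo y zy, 0 < η z y) ∧
      (∀ z, zy < z → η z y < 0) ∧
      (∀ z', y < z' → η z' y = 0 → z' = zy) :=
  stmt_1_general y₀ hy₀ G R R' hGconc hGlim hR'pos hGR η hη
end

section
/- Assume in addition that Ĝ is continuously differentiable and that R̂ is twice continuously differentiable with R̂''(y) < 0 for all y ≥ y₀. Then the map y ↦ z_y (where z_y is the unique root in (y,∞) of η(·,y) = 0) is continuously differentiable on [y₀,∞), strictly increasing, and z_y → ∞ as y → ∞. In particular, at the root one has ∂η/∂y (z_y, y) = −R̂''(y) > 0. -/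
/-!
For fixed `y`, the tangent gap `z ↦ G z - (R y + R' y * (z - y))` is concave, positive at `z = y`
and zero at `z_y`, so for `z > y` its sign tells on which side of `z_y` the point `z` lies.
Its derivative in `y` is `-R'' y * (z - y) > 0`: replacing `y₁` by `y₂ > y₁` makes the gap at
`z_{y₁}` positive, which forces `z_{y₁} < z_{y₂}`, and continuity of the gap in `y` gives continuity
of `y ↦ z_y` through the same sign test. Differentiating `G z_y = R y + R' y * (z_y - y)` along
difference quotients yields `z_y' = R'' y * (z_y - y) / (G' z_y - R' y)`, whose denominator is
negative because `G` is concave.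
-/

open Set Filter Topology

namespace ConcaveOn

variable {s : Set ℝ} {f : ℝ → ℝ} {a r x : ℝ}

theorem pos_of_lt_of_eq_zero (hf : ConcaveOn ℝ s f) (ha : a ∈ s) (hr : r ∈ s) (hfa : 0 < f a)
    (hfr : f r = 0) (hax : a < x) (hxr : x < r) : 0 < f x := by
  have hslope := hf.slope_anti_adjacent ha hr hax hxr
  rw [hfr] at hslope
  by_contra! hfx
  have hl : 0 ≤ (0 - f x) / (r - x) := div_nonneg (by linarith) (by linarith)
  have hneg : (f x - f a) / (x - a) < 0 := div_neg_of_neg_of_pos (by linarith) (by linarith)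
  linarith

theorem neg_of_gt_of_eq_zero (hf : ConcaveOn ℝ s f) (ha : a ∈ s) (hx : x ∈ s) (hfa : 0 < f a)
    (hfr : f r = 0) (har : a < r) (hrx : r < x) : f x < 0 := by
  have hslope := hf.slope_anti_adjacent ha hx har hrx
  rw [hfr] at hslope
  have hneg : (0 - f a) / (r - a) < 0 := div_neg_of_neg_of_pos (by linarith) (by linarith)
  have key := hslope.trans_lt hneg
  rw [div_lt_iff₀ (sub_pos.2 hrx)] at key
  linarith

theorem pos_iff_lt_of_eq_zero (hf : ConcaveOn ℝ s f) (ha : a ∈ s) (hr : r ∈ s) (hx : x ∈ s)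
    (hfa : 0 < f a) (hfr : f r = 0) (har : a < r) (hax : a < x) : 0 < f x ↔ x < r := by
  refine ⟨fun hfx => ?_, hf.pos_of_lt_of_eq_zero ha hr hfa hfr hax⟩
  by_contra! hrx
  rcases hrx.eq_or_lt with rfl | hrx
  · exact hfx.ne' hfr
  · exact (hf.neg_of_gt_of_eq_zero ha hx hfa hfr har hrx).not_gt hfx

theorem neg_iff_lt_of_eq_zero (hf : ConcaveOn ℝ s f) (ha : a ∈ s) (hr : r ∈ s) (hx : x ∈ s)
    (hfa : 0 < f a) (hfr : f r = 0) (har : a < r) (hax : a < x) : f x < 0 ↔ r < x := by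
  refine ⟨fun hfx => ?_, hf.neg_of_gt_of_eq_zero ha hx hfa hfr har⟩
  by_contra! hxr
  rcases hxr.eq_or_lt with rfl | hxr
  · exact hfx.ne hfr
  · exact (hf.pos_of_lt_of_eq_zero ha hr hfa hfr hax hxr).not_gt hfx

end ConcaveOn

/-- The numerator of the paper's `η`: `η z y = tangentGap G R R' y z / (z - y)`. -/
def tangentGap (G R R' : ℝ → ℝ) (y z : ℝ) : ℝ := G z - (R y + R' y * (z - y))

section TangentGap

variable {G R R' R'' : ℝ → ℝ} {s : Set ℝ} {y z r : ℝ}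

theorem tangentGap_self : tangentGap G R R' y y = G y - R y := by
  simp [tangentGap]

theorem concaveOn_tangentGap (hG : ConcaveOn ℝ s G) : ConcaveOn ℝ s (tangentGap G R R' y) := by
  refine ⟨hG.1, fun u hu v hv a b ha hb hab => ?_⟩
  have hGuv := hG.2 hu hv ha hb hab
  simp only [smul_eq_mul, tangentGap] at hGuv ⊢
  have hb' : b = 1 - a := by linarith
  subst hb'
  nlinarith

theorem slope_sub_eq_tangentGap_div (hzy : z ≠ y) :
    (G z - R y) / (z - y) - R' y = tangentGap G R R' y z / (z - y) := by
  rw [tangentGap]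
  field_simp
  ring

theorem tangentGap_pos_iff (hG : ConcaveOn ℝ (Ioi 0) G) (hy : 0 < y) (hGR : R y < G y)
    (hyr : y < r) (hr : tangentGap G R R' y r = 0) (hyz : y < z) :
    0 < tangentGap G R R' y z ↔ z < r :=
  (concaveOn_tangentGap hG).pos_iff_lt_of_eq_zero hy (hy.trans hyr) (hy.trans hyz)
    (by rwa [tangentGap_self, sub_pos]) hr hyr hyz

theorem tangentGap_neg_iff (hG : ConcaveOn ℝ (Ioi 0) G) (hy : 0 < y) (hGR : R y < G y)
    (hyr : y < r) (hr : tangentGap G R R' y r = 0) (hyz : y < z) :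
    tangentGap G R R' y z < 0 ↔ r < z :=
  (concaveOn_tangentGap hG).neg_iff_lt_of_eq_zero hy (hy.trans hyr) (hy.trans hyz)
    (by rwa [tangentGap_self, sub_pos]) hr hyr hyz

theorem lt_of_hasDerivAt_of_tangentGap_eq_zero {g : ℝ} (hG : ConcaveOn ℝ (Ioi 0) G) (hy : 0 < y)
    (hGR : R y < G y) (hyr : y < r) (hr : tangentGap G R R' y r = 0) (hg : HasDerivAt G g r) :
    g < R' y := by
  have hslope := hG.le_slope_of_hasDerivAt hy (hy.trans hyr) hyr hg
  rw [slope_def_field] at hslope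
  have hGr : G r - G y < R' y * (r - y) := by
    rw [tangentGap] at hr
    linarith
  exact hslope.trans_lt ((div_lt_iff₀ (sub_pos.2 hyr)).2 hGr)

theorem hasDerivAt_tangentGap_left (hR : HasDerivAt R (R' y) y) (hR' : HasDerivAt R' (R'' y) y) :
    HasDerivAt (fun y => tangentGap G R R' y z) (-R'' y * (z - y)) y := by
  have := (hR.add (hR'.mul ((hasDerivAt_id' y).const_sub z))).const_sub (G z)
  exact this.congr_deriv (by ring)

theorem hasDerivAt_slope_sub (hzy : z ≠ y) (hR : HasDerivAt R (R' y) y)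
    (hR' : HasDerivAt R' (R'' y) y) :
    HasDerivAt (fun y => (G z - R y) / (z - y) - R' y)
      (tangentGap G R R' y z / (z - y) ^ 2 - R'' y) y := by
  have := ((hR.const_sub (G z)).div ((hasDerivAt_id' y).const_sub z) (sub_ne_zero.2 hzy)).sub hR'
  refine this.congr_deriv ?_
  rw [tangentGap]
  field_simp
  ring

end TangentGap

theorem hasDerivWithinAt_of_eq_affine {G a b z : ℝ → ℝ} {s : Set ℝ} {y g a' b' : ℝ}
    (hG : HasDerivAt G g (z y)) (ha : HasDerivWithinAt a a' s y) (hb : HasDerivWithinAt b b' s y)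
    (hz : ContinuousWithinAt z s y) (hinj : InjOn z s) (hy : y ∈ s)
    (hrel : ∀ x ∈ s, G (z x) = a x + b x * z x) (hgb : g ≠ b y) :
    HasDerivWithinAt z ((a' + b' * z y) / (g - b y)) s y := by
  -- `(slope G (z y) (z x) - b x) * slope z y x = slope a y x + slope b y x * z y` for `x ≠ y`
  have hbc : Tendsto b (𝓝[s \ {y}] y) (𝓝 (b y)) := hb.continuousWithinAt.mono sdiff_subset
  rw [hasDerivWithinAt_iff_tendsto_slope] at ha hb ⊢
  have hz' : Tendsto z (𝓝[s \ {y}] y) (𝓝[≠] z y) :=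
    tendsto_nhdsWithin_iff.2 ⟨hz.mono sdiff_subset,
      eventually_nhdsWithin_of_forall fun x hx => hinj.ne hx.1 hy hx.2⟩
  have hGs : Tendsto (fun x => slope G (z y) (z x)) (𝓝[s \ {y}] y) (𝓝 g) :=
    (hasDerivAt_iff_tendsto_slope.1 hG).comp hz'
  have hden := hGs.sub hbc
  refine ((ha.add (hb.mul tendsto_const_nhds)).div hden (sub_ne_zero.2 hgb)).congr' ?_
  filter_upwards [hden.eventually_ne (sub_ne_zero.2 hgb), self_mem_nhdsWithin] with x hx hxs
  have hxy : x - y ≠ 0 := sub_ne_zero.2 hxs.2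
  have hzxy : z x - z y ≠ 0 := sub_ne_zero.2 (hinj.ne hxs.1 hy hxs.2)
  rw [Pi.div_apply, div_eq_iff hx]
  simp only [slope_def_field] at hx ⊢
  field_simp
  linear_combination hrel y hy - hrel x hxs.1

theorem contDiffOn_one_of_hasDerivWithinAt {f f' : ℝ → ℝ} {s : Set ℝ} (hs : UniqueDiffOn ℝ s)
    (hf : ∀ x ∈ s, HasDerivWithinAt f (f' x) s x) (hf' : ContinuousOn f' s) :
    ContDiffOn ℝ 1 f s :=
  (contDiffOn_one_iff_derivWithin hs).2 ⟨fun x hx => (hf x hx).differentiableWithinAt,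
    hf'.congr fun x hx => (hf x hx).derivWithin (hs x hx)⟩

section TangentRoot

variable {G G' R R' R'' zfun : ℝ → ℝ} {y₀ z : ℝ}

theorem strictMonoOn_tangentGap_left (hR : ∀ y ∈ Ici y₀, HasDerivAt R (R' y) y)
    (hR' : ∀ y ∈ Ici y₀, HasDerivAt R' (R'' y) y) (hR'' : ∀ y ∈ Ici y₀, R'' y < 0) :
    StrictMonoOn (fun y => tangentGap G R R' y z) (Icc y₀ z) := by
  have hd : ∀ y ∈ Icc y₀ z, HasDerivAt (fun y => tangentGap G R R' y z) (-R'' y * (z - y)) y :=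
    fun y hy => hasDerivAt_tangentGap_left (hR y hy.1) (hR' y hy.1)
  refine strictMonoOn_of_deriv_pos (convex_Icc y₀ z)
    (fun y hy => (hd y hy).continuousAt.continuousWithinAt) fun y hy => ?_
  rw [interior_Icc] at hy
  rw [(hd y (Ioo_subset_Icc_self hy)).deriv]
  exact mul_pos (neg_pos.2 (hR'' y hy.1.le)) (sub_pos.2 hy.2)

theorem strictMonoOn_of_tangentGap_eq_zero (hG : ConcaveOn ℝ (Ioi 0) G) (hy₀ : 0 < y₀)
    (hGR : ∀ y ∈ Ici y₀, R y < G y) (hR : ∀ y ∈ Ici y₀, HasDerivAt R (R' y) y)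
    (hR' : ∀ y ∈ Ici y₀, HasDerivAt R' (R'' y) y) (hR'' : ∀ y ∈ Ici y₀, R'' y < 0)
    (hz : ∀ y ∈ Ici y₀, y < zfun y ∧ tangentGap G R R' y (zfun y) = 0) :
    StrictMonoOn zfun (Ici y₀) := by
  intro y₁ h₁ y₂ h₂ h₁₂
  obtain ⟨hy₁z, hz₁⟩ := hz y₁ h₁
  obtain ⟨hy₂z, hz₂⟩ := hz y₂ h₂
  rcases le_or_gt (zfun y₁) y₂ with hle | hlt
  · exact hle.trans_lt hy₂z
  have hgap : 0 < tangentGap G R R' y₂ (zfun y₁) :=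
    calc 0 = tangentGap G R R' y₁ (zfun y₁) := hz₁.symm
      _ < tangentGap G R R' y₂ (zfun y₁) :=
        strictMonoOn_tangentGap_left hR hR' hR'' ⟨h₁, hy₁z.le⟩ ⟨h₂, hlt.le⟩ h₁₂
  exact (tangentGap_pos_iff hG (hy₀.trans_le h₂) (hGR y₂ h₂) hy₂z hz₂ hlt).1 hgap

theorem continuousOn_of_tangentGap_eq_zero (hG : ConcaveOn ℝ (Ioi 0) G) (hy₀ : 0 < y₀)
    (hGR : ∀ y ∈ Ici y₀, R y < G y) (hR : ∀ y ∈ Ici y₀, HasDerivAt R (R' y) y)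
    (hR' : ∀ y ∈ Ici y₀, HasDerivAt R' (R'' y) y)
    (hz : ∀ y ∈ Ici y₀, y < zfun y ∧ tangentGap G R R' y (zfun y) = 0) :
    ContinuousOn zfun (Ici y₀) := by
  intro y hy
  have hpos : ∀ y ∈ Ici y₀, 0 < y := fun y hy => hy₀.trans_le hy
  obtain ⟨hyz, hzy⟩ := hz y hy
  have hgap : ∀ w, ContinuousAt (fun y => tangentGap G R R' y w) y := fun w =>
    (hasDerivAt_tangentGap_left (hR y hy) (hR' y hy)).continuousAt
  refine tendsto_order.2 ⟨fun a ha => ?_, fun b hb => ?_⟩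
  · set w := max a ((y + zfun y) / 2)
    have hyw : y < w := lt_max_of_lt_right (by linarith)
    have hgw : 0 < tangentGap G R R' y w :=
      (tangentGap_pos_iff hG (hpos y hy) (hGR y hy) hyz hzy hyw).2 (max_lt ha (by linarith))
    filter_upwards [self_mem_nhdsWithin,
      nhdsWithin_le_nhds ((hgap w).eventually (lt_mem_nhds hgw)),
      nhdsWithin_le_nhds (gt_mem_nhds hyw)] with y' hy' hgw' hy'w
    obtain ⟨hy'z, hzy'⟩ := hz y' hy'
    exact (le_max_left a _).trans_lt
      ((tangentGap_pos_iff hG (hpos y' hy') (hGR y' hy') hy'z hzy' hy'w).1 hgw')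
  · have hyb : y < b := hyz.trans hb
    have hgb : tangentGap G R R' y b < 0 :=
      (tangentGap_neg_iff hG (hpos y hy) (hGR y hy) hyz hzy hyb).2 hb
    filter_upwards [self_mem_nhdsWithin,
      nhdsWithin_le_nhds ((hgap b).eventually (gt_mem_nhds hgb)),
      nhdsWithin_le_nhds (gt_mem_nhds hyb)] with y' hy' hgb' hy'b
    obtain ⟨hy'z, hzy'⟩ := hz y' hy'
    exact (tangentGap_neg_iff hG (hpos y' hy') (hGR y' hy') hy'z hzy' hy'b).1 hgb'

theorem hasDerivWithinAt_of_tangentGap_eq_zero (hG : ConcaveOn ℝ (Ioi 0) G)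
    (hG' : ∀ z ∈ Ioi 0, HasDerivAt G (G' z) z) (hy₀ : 0 < y₀)
    (hGR : ∀ y ∈ Ici y₀, R y < G y) (hR : ∀ y ∈ Ici y₀, HasDerivAt R (R' y) y)
    (hR' : ∀ y ∈ Ici y₀, HasDerivAt R' (R'' y) y) (hR'' : ∀ y ∈ Ici y₀, R'' y < 0)
    (hz : ∀ y ∈ Ici y₀, y < zfun y ∧ tangentGap G R R' y (zfun y) = 0) {y : ℝ} (hy : y ∈ Ici y₀) :
    HasDerivWithinAt zfun (R'' y * (zfun y - y) / (G' (zfun y) - R' y)) (Ici y₀) y := by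
  have hy0 : 0 < y := hy₀.trans_le hy
  obtain ⟨hyz, hzy⟩ := hz y hy
  have hGz := hG' _ (hy0.trans hyz)
  have ha : HasDerivAt (fun x => R x - x * R' x) (R' y - (1 * R' y + y * R'' y)) y :=
    (hR y hy).sub ((hasDerivAt_id' y).mul (hR' y hy))
  have hrel : ∀ x ∈ Ici y₀, G (zfun x) = (R x - x * R' x) + R' x * zfun x := fun x hx => by
    have hx0 := (hz x hx).2
    rw [tangentGap] at hx0
    linear_combination hx0
  have := hasDerivWithinAt_of_eq_affine hGz ha.hasDerivWithinAt (hR' y hy).hasDerivWithinAt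
    (continuousOn_of_tangentGap_eq_zero hG hy₀ hGR hR hR' hz y hy)
    (strictMonoOn_of_tangentGap_eq_zero hG hy₀ hGR hR hR' hR'' hz).injOn hy hrel
    (lt_of_hasDerivAt_of_tangentGap_eq_zero hG hy0 (hGR y hy) hyz hzy hGz).ne
  exact this.congr_deriv (by ring)

theorem contDiffOn_of_tangentGap_eq_zero (hG : ConcaveOn ℝ (Ioi 0) G)
    (hG' : ∀ z ∈ Ioi 0, HasDerivAt G (G' z) z) (hG'c : ContinuousOn G' (Ioi 0)) (hy₀ : 0 < y₀)
    (hGR : ∀ y ∈ Ici y₀, R y < G y) (hR : ∀ y ∈ Ici y₀, HasDerivAt R (R' y) y)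
    (hR' : ∀ y ∈ Ici y₀, HasDerivAt R' (R'' y) y) (hR''c : ContinuousOn R'' (Ici y₀))
    (hR'' : ∀ y ∈ Ici y₀, R'' y < 0)
    (hz : ∀ y ∈ Ici y₀, y < zfun y ∧ tangentGap G R R' y (zfun y) = 0) :
    ContDiffOn ℝ 1 zfun (Ici y₀) := by
  have hzc := continuousOn_of_tangentGap_eq_zero hG hy₀ hGR hR hR' hz
  have hzpos : ∀ y ∈ Ici y₀, zfun y ∈ Ioi 0 := fun y hy => (hy₀.trans_le hy).trans (hz y hy).1
  have hR'c : ContinuousOn R' (Ici y₀) := fun y hy => (hR' y hy).continuousAt.continuousWithinAt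
  refine contDiffOn_one_of_hasDerivWithinAt (uniqueDiffOn_Ici y₀)
    (fun y hy => hasDerivWithinAt_of_tangentGap_eq_zero hG hG' hy₀ hGR hR hR' hR'' hz hy) ?_
  refine (hR''c.mul (hzc.sub continuousOn_id)).div ((hG'c.comp hzc hzpos).sub hR'c) fun y hy => ?_
  exact sub_ne_zero.2 (lt_of_hasDerivAt_of_tangentGap_eq_zero hG (hy₀.trans_le hy) (hGR y hy)
    (hz y hy).1 (hz y hy).2 (hG' _ (hzpos y hy))).ne

end TangentRoot

theorem stmt_2_general
    (y₀ : ℝ) (hy₀ : 0 < y₀)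
    (G R G' R' R'' : ℝ → ℝ)
    (hGdiff : ∀ z ∈ Ioi (0 : ℝ), HasDerivAt G (G' z) z)
    (hG'cont : ContinuousOn G' (Ioi (0 : ℝ)))
    (hGconc : ConcaveOn ℝ (Ioi (0 : ℝ)) G)
    (hRdiff : ∀ y ∈ Ici y₀, HasDerivAt R (R' y) y)
    (hR'diff : ∀ y ∈ Ici y₀, HasDerivAt R' (R'' y) y)
    (hR''cont : ContinuousOn R'' (Ici y₀))
    (hR''neg : ∀ y ∈ Ici y₀, R'' y < 0)
    (hGR : ∀ y ∈ Ici y₀, R y < G y)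
    (η : ℝ → ℝ → ℝ)
    (hη : ∀ z y, η z y = (G z - R y) / (z - y) - R' y)
    (zfun : ℝ → ℝ)
    (hzfun : ∀ y ∈ Ici y₀, y < zfun y ∧ η (zfun y) y = 0 ∧
      ∀ z, y < z → η z y = 0 → z = zfun y) :
    ContDiffOn ℝ 1 zfun (Ici y₀) ∧
      StrictMonoOn zfun (Ici y₀) ∧
      Tendsto zfun atTop atTop ∧
      ∀ y ∈ Ici y₀,
        HasDerivAt (fun y' => η (zfun y) y') (-R'' y) y ∧ 0 < -R'' y := by
  have hroot : ∀ y ∈ Ici y₀, y < zfun y ∧ tangentGap G R R' y (zfun y) = 0 := fun y hy => by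
    obtain ⟨hyz, hη0, -⟩ := hzfun y hy
    rw [hη, slope_sub_eq_tangentGap_div hyz.ne', div_eq_zero_iff,
      or_iff_left (sub_ne_zero.2 hyz.ne')] at hη0
    exact ⟨hyz, hη0⟩
  refine ⟨contDiffOn_of_tangentGap_eq_zero hGconc hGdiff hG'cont hy₀ hGR hRdiff hR'diff hR''cont
      hR''neg hroot,
    strictMonoOn_of_tangentGap_eq_zero hGconc hy₀ hGR hRdiff hR'diff hR''neg hroot,
    tendsto_atTop_mono' atTop ((eventually_ge_atTop y₀).mono fun y hy => (hroot y hy).1.le)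
      tendsto_id,
    fun y hy => ⟨?_, neg_pos.2 (hR''neg y hy)⟩⟩
  have hd := hasDerivAt_slope_sub (G := G) (hroot y hy).1.ne' (hRdiff y hy) (hR'diff y hy)
  rw [(hroot y hy).2, zero_div, zero_sub] at hd
  simpa only [hη] using hd

/-- if moreover `Ĝ` is `C¹` and `R̂` is `C²` with `R̂'' < 0`, then `y ↦ z_y`
is continuously differentiable on `[y₀,∞)`, strictly increasing, and tends to `∞`;
at the root, `∂η/∂y (z_y, y) = −R̂''(y) > 0`. -/
theorem stmt_2
    (y₀ : ℝ) (hy₀ : 0 < y₀)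
    (G R G' R' R'' : ℝ → ℝ)
    (hGdiff : ∀ z ∈ Ioi (0 : ℝ), HasDerivAt G (G' z) z)
    (hG'cont : ContinuousOn G' (Ioi (0 : ℝ)))
    (hGconc : ConcaveOn ℝ (Ioi (0 : ℝ)) G)
    (hGpos : ∀ z ∈ Ioi (0 : ℝ), 0 < G z)
    (hGlim : Tendsto (fun z => G z / z) atTop (nhds 0))
    (hRdiff : ∀ y ∈ Ici y₀, HasDerivAt R (R' y) y)
    (hR'diff : ∀ y ∈ Ici y₀, HasDerivAt R' (R'' y) y)
    (hR''cont : ContinuousOn R'' (Ici y₀))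
    (hR'pos : ∀ y ∈ Ici y₀, 0 < R' y)
    (hR''neg : ∀ y ∈ Ici y₀, R'' y < 0)
    (hGR : ∀ y ∈ Ici y₀, R y < G y)
    (η : ℝ → ℝ → ℝ)
    (hη : ∀ z y, η z y = (G z - R y) / (z - y) - R' y)
    (zfun : ℝ → ℝ)
    (hzfun : ∀ y ∈ Ici y₀, y < zfun y ∧ η (zfun y) y = 0 ∧
      ∀ z, y < z → η z y = 0 → z = zfun y) :
    ContDiffOn ℝ 1 zfun (Ici y₀) ∧
      StrictMonoOn zfun (Ici y₀) ∧
      Tendsto zfun atTop atTop ∧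
      ∀ y ∈ Ici y₀,
        HasDerivAt (fun y' => η (zfun y) y') (-R'' y) y ∧ 0 < -R'' y :=
  stmt_2_general y₀ hy₀ G R G' R' R'' hGdiff hG'cont hGconc hRdiff hR'diff hR''cont hR''neg hGR η hη
    zfun hzfun
end

section
/- Let M : ℝ → ℝ be continuous and nondecreasing, let μ_M be the Lebesgue–Stieltjes measure associated with M, fix T ≥ 0, and for y ∈ ℝ set τ(y) = inf{t ∈ [0,∞) : M(t) ≥ y}. Then the restriction of μ_M to the interval (0,T] equals the pushforward under y ↦ τ(y) of Lebesgue measure restricted to the interval (M(0), M(T)]. Equivalently, for every Borel measurable g : ℝ → [0,∞], ∫_{(0,T]} g(t) μ_M(dt) = ∫_{(M(0), M(T)]} g(τ(y)) dy. -/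
open Set Filter MeasureTheory

/-- pathwise change-of-time formula. For `M` continuous and nondecreasing with
Lebesgue–Stieltjes measure `μM`, `T ≥ 0`, and `τ(y) = inf {t ∈ [0,∞) : M t ≥ y}`,
the restriction of `μM` to `(0,T]` is the pushforward under `τ` of Lebesgue measure
restricted to `(M 0, M T]`; equivalently, for every Borel `g : ℝ → [0,∞]`,
`∫_{(0,T]} g dμM = ∫_{(M 0, M T]} g(τ(y)) dy`. -/
theorem stmt_4
    (M : ℝ → ℝ) (hMc : Continuous M) (hMm : Monotone M)
    (μM : Measure ℝ)
    (hμM : ∀ s t : ℝ, s ≤ t → μM (Set.Ioc s t) = ENNReal.ofReal (M t - M s))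
    (T : ℝ) (hT : 0 ≤ T)
    (τ : ℝ → ℝ)
    (hτ : ∀ y : ℝ, τ y = sInf {t : ℝ | 0 ≤ t ∧ y ≤ M t}) :
    Measure.map τ (volume.restrict (Set.Ioc (M 0) (M T))) = μM.restrict (Set.Ioc 0 T) ∧
      ∀ g : ℝ → ENNReal, Measurable g →
        ∫⁻ t in Set.Ioc 0 T, g t ∂μM = ∫⁻ y in Set.Ioc (M 0) (M T), g (τ y) := by
  -- `hμM` holds for all `s t` (both sides vanish when `t ≤ s`)
  have hμM' : ∀ s t : ℝ, μM (Set.Ioc s t) = ENNReal.ofReal (M t - M s) := by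
    intro s t
    rcases le_total s t with h | h
    · exact hμM s t h
    · rw [Set.Ioc_eq_empty (not_lt.mpr h), measure_empty]
      exact (ENNReal.ofReal_eq_zero.mpr (by linarith [hMm h])).symm
  -- key facts about `τ` on `Ioc (M 0) (M T)`
  have key : ∀ y ∈ Set.Ioc (M 0) (M T),
      (0 ≤ τ y ∧ y ≤ M (τ y)) ∧ ∀ t, 0 ≤ t → (τ y ≤ t ↔ y ≤ M t) := by
    intro y hy
    have hclosed : IsClosed {t : ℝ | 0 ≤ t ∧ y ≤ M t} := by
      have : {t : ℝ | 0 ≤ t ∧ y ≤ M t} = Set.Ici 0 ∩ M ⁻¹' Set.Ici y := by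
        ext t; simp [Set.mem_Ici, and_comm]
      rw [this]
      exact isClosed_Ici.inter (isClosed_Ici.preimage hMc)
    have hne : {t : ℝ | 0 ≤ t ∧ y ≤ M t}.Nonempty := ⟨T, hT, hy.2⟩
    have hbdd : BddBelow {t : ℝ | 0 ≤ t ∧ y ≤ M t} := ⟨0, fun t ht => ht.1⟩
    have hmem : τ y ∈ {t : ℝ | 0 ≤ t ∧ y ≤ M t} := by
      rw [hτ]; exact hclosed.csInf_mem hne hbdd
    refine ⟨⟨hmem.1, hmem.2⟩, fun t ht0 => ⟨fun hle => le_trans hmem.2 (hMm hle),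
      fun hyt => ?_⟩⟩
    rw [hτ]; exact csInf_le hbdd ⟨ht0, hyt⟩
  -- the monotone modification of τ
  set τ' : ℝ → ℝ := fun y => sInf ({t : ℝ | 0 ≤ t ∧ y ≤ M t} ∪ {T}) with hτ'def
  have hτ'mono : Monotone τ' := by
    intro y1 y2 h12
    apply csInf_le_csInf
    · refine ⟨0, ?_⟩
      rintro t (⟨ht, _⟩ | ht)
      · exact ht
      · rw [Set.mem_singleton_iff] at ht; rw [ht]; exact hT
    · exact ⟨T, Or.inr rfl⟩
    · rintro t (⟨ht, hyt⟩ | ht)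
      · exact Or.inl ⟨ht, le_trans h12 hyt⟩
      · exact Or.inr ht
  have hτ'meas : Measurable τ' := hτ'mono.measurable
  have heq : ∀ y ∈ Set.Ioc (M 0) (M T), τ y = τ' y := by
    intro y hy
    have : {t : ℝ | 0 ≤ t ∧ y ≤ M t} ∪ {T} = {t : ℝ | 0 ≤ t ∧ y ≤ M t} :=
      Set.union_eq_self_of_subset_right (Set.singleton_subset_iff.mpr ⟨hT, hy.2⟩)
    rw [hτ'def]; simp only [this]; exact hτ y
  have hae : τ =ᵐ[volume.restrict (Set.Ioc (M 0) (M T))] τ' :=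
    (ae_restrict_iff' measurableSet_Ioc).mpr (Filter.Eventually.of_forall heq)
  have hmapcongr : Measure.map τ (volume.restrict (Set.Ioc (M 0) (M T)))
      = Measure.map τ' (volume.restrict (Set.Ioc (M 0) (M T))) :=
    Measure.map_congr hae
  -- the preimage computation
  have hset : ∀ a b : ℝ,
      τ' ⁻¹' (Set.Ioc a b) ∩ Set.Ioc (M 0) (M T) = Set.Ioc (M (a ⊔ 0)) (M (b ⊓ T)) := by
    intro a b
    ext y
    simp only [Set.mem_inter_iff, Set.mem_preimage, Set.mem_Ioc]
    constructor
    · rintro ⟨⟨ha, hb⟩, hy0, hyT⟩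
      have hyI : y ∈ Set.Ioc (M 0) (M T) := ⟨hy0, hyT⟩
      rw [← heq y hyI] at ha hb
      obtain ⟨⟨hτ0, hτM⟩, hchar⟩ := key y hyI
      constructor
      · rw [hMm.map_max]
        refine max_lt ?_ hy0
        rcases lt_or_ge a 0 with h | h
        · exact lt_of_le_of_lt (hMm h.le) hy0
        · by_contra hc
          push_neg at hc
          exact absurd ((hchar a h).mpr hc) (not_le.mpr ha)
      · rw [hMm.map_min]
        exact le_min (le_trans hτM (hMm hb)) hyT
    · rintro ⟨hlo, hhi⟩
      have hy0 : M 0 < y := lt_of_le_of_lt (hMm (le_max_right a 0)) hlo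
      have hyT : y ≤ M T := hhi.trans (hMm (min_le_right b T))
      have hyI : y ∈ Set.Ioc (M 0) (M T) := ⟨hy0, hyT⟩
      obtain ⟨⟨hτ0, hτM⟩, hchar⟩ := key y hyI
      have hb0 : 0 ≤ b ⊓ T := by
        by_contra h
        push_neg at h
        have := hMm h.le
        have := hhi
        linarith
      refine ⟨⟨?_, ?_⟩, hy0, hyT⟩
      · rw [← heq y hyI]
        rcases lt_or_ge a 0 with h | h
        · exact lt_of_lt_of_le h hτ0
        · rw [max_eq_left h] at hlo
          by_contra hc
          push_neg at hc
          exact absurd ((hchar a h).mp hc) (not_le.mpr hlo)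
      · rw [← heq y hyI]
        exact le_trans ((hchar (b ⊓ T) hb0).mpr hhi) (min_le_left b T)
  -- the map measure applied to Ioc a b
  have hmap_apply : ∀ a b : ℝ,
      Measure.map τ' (volume.restrict (Set.Ioc (M 0) (M T))) (Set.Ioc a b)
        = ENNReal.ofReal (M (b ⊓ T) - M (a ⊔ 0)) := by
    intro a b
    rw [Measure.map_apply hτ'meas measurableSet_Ioc,
      Measure.restrict_apply (hτ'meas measurableSet_Ioc), hset a b, Real.volume_Ioc]
  -- the measure equality
  have hmain : Measure.map τ' (volume.restrict (Set.Ioc (M 0) (M T)))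
      = μM.restrict (Set.Ioc 0 T) := by
    refine Measure.ext_of_Ioc' _ _ (fun a b _ => ?_) (fun a b _ => ?_)
    · rw [hmap_apply a b]; exact ENNReal.ofReal_ne_top
    · rw [hmap_apply a b, Measure.restrict_apply measurableSet_Ioc, Set.Ioc_inter_Ioc,
        hμM']
  have hmap_eq : Measure.map τ (volume.restrict (Set.Ioc (M 0) (M T)))
      = μM.restrict (Set.Ioc 0 T) := hmapcongr.trans hmain
  refine ⟨hmap_eq, fun g hg => ?_⟩
  have haem : AEMeasurable τ (volume.restrict (Set.Ioc (M 0) (M T))) := ⟨τ', hτ'meas, hae⟩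
  rw [← hmap_eq, lintegral_map' hg.aemeasurable haem]
end

section
/- Let y₀ > 0 and let φ : [y₀,∞) → ℝ be differentiable and strictly concave, and suppose φ(y)/y ≤ φ(y₀)/y₀ for all y ≥ y₀. Then φ(y) − y·φ'(y) > 0 for every y > y₀. -/
open Set

/-- if `φ` is differentiable and strictly concave on `[y₀,∞)` (`y₀ > 0`) with
`φ(y)/y ≤ φ(y₀)/y₀` for all `y ≥ y₀`, then `φ(y) − y·φ'(y) > 0` for every `y > y₀`. -/
theorem stmt_5
    (y₀ : ℝ) (hy₀ : 0 < y₀)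
    (φ φ' : ℝ → ℝ)
    (hdiff : ∀ y ∈ Ici y₀, HasDerivAt φ (φ' y) y)
    (hconc : StrictConcaveOn ℝ (Ici y₀) φ)
    (hratio : ∀ y ∈ Ici y₀, φ y / y ≤ φ y₀ / y₀) :
    ∀ y : ℝ, y₀ < y → 0 < φ y - y * φ' y := by
  intro y hy
  have hy0 : (0:ℝ) < y := hy₀.trans hy
  have hyS : y ∈ Ici y₀ := le_of_lt hy
  have h0S : y₀ ∈ Ici y₀ := self_mem_Ici
  -- strict convexity of -φ gives slope (-φ) y₀ y < -(φ' y)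
  have hneg : StrictConvexOn ℝ (Ici y₀) (-φ) := hconc.neg
  have hder : HasDerivAt (-φ) (-(φ' y)) y := (hdiff y hyS).neg
  have hslope := hneg.slope_lt_of_hasDerivAt h0S hyS hy hder
  have hsub : y - y₀ ≠ 0 := by linarith
  rw [slope_def_field] at hslope
  have hslope' : φ' y < (φ y - φ y₀) / (y - y₀) := by
    have : ((-φ) y - (-φ) y₀) / (y - y₀) = -((φ y - φ y₀) / (y - y₀)) := by
      simp [Pi.neg_apply, neg_div, neg_sub]
      ring_nf
    rw [this] at hslope
    linarith
  -- ratio hypothesis: y₀ * φ y ≤ y * φ y₀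
  have hr := hratio y hyS
  have hr' : y₀ * φ y ≤ y * φ y₀ := by
    rw [div_le_div_iff₀ hy0 hy₀] at hr
    linarith
  have key : φ' y * (y - y₀) < φ y - φ y₀ := by
    have := (lt_div_iff₀ (by linarith : (0:ℝ) < y - y₀)).mp hslope'
    linarith
  -- combine
  nlinarith [mul_pos hy0 (sub_pos.mpr hy), mul_lt_mul_of_pos_left key hy0]
end

section
/- Let x_R < m be points of an interval ℐ, let h₁, h₂ : ℐ → (0,∞) be differentiable with h₁'(x_R)h₂(x_R) − h₁(x_R)h₂'(x_R) = γ·S'(x_R) for constants γ > 0 and S'(x_R) > 0, and suppose D := h₁(m)h₂(x_R) − h₁(x_R)h₂(m) > 0. Let R(x_R), R'(x_R), G(m) be reals satisfying the smooth-fit relation R'(x_R) = (h₁'(x_R)/h₁(x_R))·R(x_R), and let H(m) > 0, σ²(x_R) > 0, L(x_R) < 0. Define E(x_R,m) = (H(m)σ²(x_R)/(2L(x_R)h₂(x_R)))·{ (γS'(x_R)/D)·[R(x_R)h₂(m) − G(m)h₂(x_R)] + R'(x_R)h₂(x_R) − R(x_R)h₂'(x_R) }. Then E(x_R,m) has the same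 sign as h₁(x_R)G(m) − h₁(m)R(x_R); in particular E(x_R,m) > 0 if and only if (h₁(x_R)/h₁(m))·G(m) > R(x_R). -/
/-!
Under the smooth-fit relation `R' = (h₁'/h₁) R`, the Wronskian identity turns the last two terms
of `E` into `γ S' R / h₁(x_R)`. Combined with the first term over the common denominator
`D h₁(x_R)`, the numerator collapses, via the definition of `D`, to
`h₂(x_R) (h₁(m) R − h₁(x_R) G)`. Hence `E` is a positive multiple of `h₁(x_R) G − h₁(m) R`
(the signs of `L < 0` and of the minus sign cancel).
-/

lemma Real.sign_mul_of_pos_left {c : ℝ} (hc : 0 < c) (x : ℝ) : Real.sign (c * x) = Real.sign x := by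
  rcases lt_trichotomy x 0 with hx | rfl | hx
  · rw [Real.sign_of_neg hx, Real.sign_of_neg (mul_neg_of_pos_of_neg hc hx)]
  · rw [mul_zero]
  · rw [Real.sign_of_pos hx, Real.sign_of_pos (mul_pos hc hx)]

lemma wronskian_smooth_fit {h₁ h₂ h₁' h₂' W R R' : ℝ} (h₁_ne : h₁ ≠ 0)
    (hW : h₁' * h₂ - h₁ * h₂' = W) (hsf : R' = h₁' / h₁ * R) :
    R' * h₂ - R * h₂' = W * R / h₁ := by
  rw [hsf, ← hW]
  field_simp

lemma vectorField_eq_mul {h1xR h1m h2xR h2m h1'xR h2'xR W RxR R'xR Gm K LxR D : ℝ}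
    (h1xR_ne : h1xR ≠ 0) (h2xR_ne : h2xR ≠ 0) (hL : LxR ≠ 0) (hD_ne : D ≠ 0)
    (hW : h1'xR * h2xR - h1xR * h2'xR = W) (hD : D = h1m * h2xR - h1xR * h2m)
    (hsf : R'xR = (h1'xR / h1xR) * RxR) :
    (K / (2 * LxR * h2xR)) * ((W / D) * (RxR * h2m - Gm * h2xR) + R'xR * h2xR - RxR * h2'xR) =
      K * W / (2 * -LxR * D * h1xR) * (h1xR * Gm - h1m * RxR) := by
  rw [add_sub_assoc, wronskian_smooth_fit h1xR_ne hW hsf]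
  field_simp
  rw [hD]
  ring

theorem stmt_7_general
    (h1xR h1m h2xR h2m h1'xR h2'xR γ S'xR RxR R'xR Gm Hm σ2 LxR D E : ℝ)
    (h1xRpos : 0 < h1xR) (h1mpos : 0 < h1m) (h2xRpos : 0 < h2xR)
    (hγ : 0 < γ) (hS' : 0 < S'xR)
    (hWr : h1'xR * h2xR - h1xR * h2'xR = γ * S'xR)
    (hD : D = h1m * h2xR - h1xR * h2m) (hDpos : 0 < D)
    (hsf : R'xR = (h1'xR / h1xR) * RxR)
    (hH : 0 < Hm) (hσ : 0 < σ2) (hL : LxR < 0)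
    (hE : E = (Hm * σ2 / (2 * LxR * h2xR)) *
      ((γ * S'xR / D) * (RxR * h2m - Gm * h2xR) + R'xR * h2xR - RxR * h2'xR)) :
    Real.sign E = Real.sign (h1xR * Gm - h1m * RxR) ∧
      (0 < E ↔ RxR < (h1xR / h1m) * Gm) := by
  rw [hE, vectorField_eq_mul h1xRpos.ne' h2xRpos.ne' hL.ne hDpos.ne' hWr hD hsf]
  have hc : 0 < Hm * σ2 * (γ * S'xR) / (2 * -LxR * D * h1xR) := by
    have := neg_pos.mpr hL
    positivity
  refine ⟨Real.sign_mul_of_pos_left hc _, ?_⟩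
  rw [mul_pos_iff_of_pos_left hc, sub_pos, div_mul_eq_mul_div, lt_div_iff₀ h1mpos, mul_comm RxR]

/-- sign of the vector field `E` at `(x_R, m)` under the smooth-fit relation.
`E(x_R,m)` has the same sign as `h₁(x_R)G(m) − h₁(m)R(x_R)`; in particular
`E(x_R,m) > 0 ↔ (h₁(x_R)/h₁(m))·G(m) > R(x_R)`. -/
theorem stmt_7
    (xR m : ℝ) (hxm : xR < m)
    (h1xR h1m h2xR h2m h1'xR h2'xR γ S'xR RxR R'xR Gm Hm σ2 LxR D E : ℝ)
    (h1xRpos : 0 < h1xR) (h1mpos : 0 < h1m) (h2xRpos : 0 < h2xR) (h2mpos : 0 < h2m)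
    (hγ : 0 < γ) (hS' : 0 < S'xR)
    (hWr : h1'xR * h2xR - h1xR * h2'xR = γ * S'xR)
    (hD : D = h1m * h2xR - h1xR * h2m) (hDpos : 0 < D)
    (hsf : R'xR = (h1'xR / h1xR) * RxR)
    (hH : 0 < Hm) (hσ : 0 < σ2) (hL : LxR < 0)
    (hE : E = (Hm * σ2 / (2 * LxR * h2xR)) *
      ((γ * S'xR / D) * (RxR * h2m - Gm * h2xR) + R'xR * h2xR - RxR * h2'xR)) :
    Real.sign E = Real.sign (h1xR * Gm - h1m * RxR) ∧
      (0 < E ↔ RxR < (h1xR / h1m) * Gm) :=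
  stmt_7_general h1xR h1m h2xR h2m h1'xR h2'xR γ S'xR RxR R'xR Gm Hm σ2 LxR D E h1xRpos h1mpos
    h2xRpos hγ hS' hWr hD hDpos hsf hH hσ hL hE
end

section
/- Let ℐ = (α,β) be an open interval, h₁ : ℐ → (0,∞) continuous and strictly increasing, h₂ : ℐ → (0,∞) continuously differentiable and strictly decreasing, σ, S', H : ℐ → (0,∞) continuous, L : ℐ → ℝ continuous, R : ℐ → ℝ continuously differentiable, G : ℐ → ℝ continuous, and γ > 0 a constant. For x < m' in ℐ define D(x,m') = h₁(m')h₂(x) − h₁(x)h₂(m') and E(x,m') = (H(m')σ²(x)/(2L(x)h₂(x)))·{ (γS'(x)/D(x,m'))·[R(x)h₂(m') − G(m')h₂(x)] + R'(x)h₂(x) − R(x)h₂'(x) }. If m ∈ ℐ satisfies L(m) < 0 and G(m) > R(m), then E(x,m') → +∞ as (x,m') → (m,m) with x < m'. -/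
/-! As `(x, m') → (m, m)`, `D(x, m')` tends to `0` from above, because
`h₁` increases and `h₂` decreases, while `γ S'(x) (R(x) h₂(m') - G(m') h₂(x))` tends to
`γ S'(m) h₂(m) (R(m) - G(m)) < 0`. Hence the bracket in `E` tends to `-∞`, and the prefactor
tends to `H(m) σ(m)² / (2 L(m) h₂(m)) < 0`, so `E → +∞`. -/

open Set Filter Topology

theorem Filter.Tendsto.mul_div_add_atTop {X : Type*} {l : Filter X} {A N D C : X → ℝ}
    {a n c : ℝ} (ha : a < 0) (hn : n < 0) (hA : Tendsto A l (𝓝 a)) (hN : Tendsto N l (𝓝 n))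
    (hD : Tendsto D l (𝓝[>] 0)) (hC : Tendsto C l (𝓝 c)) :
    Tendsto (fun x => A x * (N x / D x + C x)) l atTop := by
  have hfrac : Tendsto (fun x => N x / D x) l atBot :=
    hN.neg_mul_atTop hn hD.inv_tendsto_nhdsGT_zero
  exact hA.neg_mul_atBot ha (hfrac.atBot_add hC)

section

variable {α β : Type*} [TopologicalSpace α] [TopologicalSpace β]
  {I : Set α} {S : Set (α × α)} {φ : α → β} {m m' : α}

theorem ContinuousOn.tendsto_comp_fst_nhdsWithin (hφ : ContinuousOn φ I) (hm : m ∈ I)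
    (hS : MapsTo Prod.fst S I) :
    Tendsto (fun p : α × α => φ p.1) (𝓝[S] (m, m')) (𝓝 (φ m)) :=
  (hφ m hm).tendsto.comp (continuous_fst.continuousWithinAt.tendsto_nhdsWithin hS)

theorem ContinuousOn.tendsto_comp_snd_nhdsWithin (hφ : ContinuousOn φ I) (hm' : m' ∈ I)
    (hS : MapsTo Prod.snd S I) :
    Tendsto (fun p : α × α => φ p.2) (𝓝[S] (m, m')) (𝓝 (φ m')) :=
  (hφ m' hm').tendsto.comp (continuous_snd.continuousWithinAt.tendsto_nhdsWithin hS)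

end

theorem tendsto_mul_sub_mul_swap_nhdsGT_zero {I : Set ℝ} {h₁ h₂ : ℝ → ℝ} {m : ℝ} (hm : m ∈ I)
    (h₁cont : ContinuousOn h₁ I) (h₁mono : StrictMonoOn h₁ I) (h₁pos : ∀ x ∈ I, 0 < h₁ x)
    (h₂cont : ContinuousOn h₂ I) (h₂anti : StrictAntiOn h₂ I) (h₂pos : ∀ x ∈ I, 0 < h₂ x) :
    Tendsto (fun p : ℝ × ℝ => h₁ p.2 * h₂ p.1 - h₁ p.1 * h₂ p.2)
      (𝓝[{p | p.1 ∈ I ∧ p.2 ∈ I ∧ p.1 < p.2}] (m, m)) (𝓝[>] 0) := by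
  set S : Set (ℝ × ℝ) := {p | p.1 ∈ I ∧ p.2 ∈ I ∧ p.1 < p.2}
  have hfst : MapsTo Prod.fst S I := fun p hp => hp.1
  have hsnd : MapsTo Prod.snd S I := fun p hp => hp.2.1
  refine tendsto_nhdsWithin_iff.mpr ⟨?_, eventually_mem_nhdsWithin.mono ?_⟩
  · have hlim := ((h₁cont.tendsto_comp_snd_nhdsWithin hm hsnd).mul
      (h₂cont.tendsto_comp_fst_nhdsWithin hm hfst)).sub
      ((h₁cont.tendsto_comp_fst_nhdsWithin hm hfst).mul
      (h₂cont.tendsto_comp_snd_nhdsWithin hm hsnd))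
    rwa [sub_self] at hlim
  · rintro ⟨x, y⟩ ⟨hx, hy, hxy⟩
    exact sub_pos.mpr (mul_lt_mul'' (h₁mono hx hy hxy) (h₂anti hx hy hxy)
      (h₁pos x hx).le (h₂pos y hy).le)

theorem stmt_9_general
    (I : Set ℝ)
    (h₁ h₂ h₂' σ S' H L R R' G : ℝ → ℝ) (γ : ℝ) (hγ : 0 < γ)
    (h₁cont : ContinuousOn h₁ I) (h₁mono : StrictMonoOn h₁ I)
    (h₁pos : ∀ x ∈ I, 0 < h₁ x)
    (h₂diff : ∀ x ∈ I, HasDerivAt h₂ (h₂' x) x) (h₂'cont : ContinuousOn h₂' I)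
    (h₂anti : StrictAntiOn h₂ I) (h₂pos : ∀ x ∈ I, 0 < h₂ x)
    (hσcont : ContinuousOn σ I) (hσpos : ∀ x ∈ I, 0 < σ x)
    (hS'cont : ContinuousOn S' I) (hS'pos : ∀ x ∈ I, 0 < S' x)
    (hHcont : ContinuousOn H I) (hHpos : ∀ x ∈ I, 0 < H x)
    (hLcont : ContinuousOn L I)
    (hRdiff : ∀ x ∈ I, HasDerivAt R (R' x) x) (hR'cont : ContinuousOn R' I)
    (hGcont : ContinuousOn G I)
    (D E : ℝ → ℝ → ℝ)
    (hD : ∀ x m', D x m' = h₁ m' * h₂ x - h₁ x * h₂ m')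
    (hE : ∀ x m', x ∈ I → m' ∈ I → x < m' →
      E x m' = (H m' * σ x ^ 2 / (2 * L x * h₂ x)) *
        ((γ * S' x / D x m') * (R x * h₂ m' - G m' * h₂ x) + R' x * h₂ x - R x * h₂' x))
    (m : ℝ) (hm : m ∈ I) (hLm : L m < 0) (hGR : R m < G m) :
    Tendsto (fun p : ℝ × ℝ => E p.1 p.2)
      (nhdsWithin (m, m) {p : ℝ × ℝ | p.1 ∈ I ∧ p.2 ∈ I ∧ p.1 < p.2})
      atTop := by
  set S : Set (ℝ × ℝ) := {p | p.1 ∈ I ∧ p.2 ∈ I ∧ p.1 < p.2}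
  have h₂cont : ContinuousOn h₂ I := fun x hx => (h₂diff x hx).continuousAt.continuousWithinAt
  have hRcont : ContinuousOn R I := fun x hx => (hRdiff x hx).continuousAt.continuousWithinAt
  have lim₁ {φ : ℝ → ℝ} (hφ : ContinuousOn φ I) :
      Tendsto (fun p : ℝ × ℝ => φ p.1) (𝓝[S] (m, m)) (𝓝 (φ m)) :=
    hφ.tendsto_comp_fst_nhdsWithin hm fun p hp => hp.1
  have lim₂ {φ : ℝ → ℝ} (hφ : ContinuousOn φ I) :
      Tendsto (fun p : ℝ × ℝ => φ p.2) (𝓝[S] (m, m)) (𝓝 (φ m)) :=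
    hφ.tendsto_comp_snd_nhdsWithin hm fun p hp => hp.2.1
  have hDlim : Tendsto (fun p : ℝ × ℝ => D p.1 p.2) (𝓝[S] (m, m)) (𝓝[>] 0) := by
    simpa only [hD] using
      tendsto_mul_sub_mul_swap_nhdsGT_zero hm h₁cont h₁mono h₁pos h₂cont h₂anti h₂pos
  have hdenominator : 2 * L m * h₂ m < 0 := mul_neg_of_neg_of_pos (by linarith) (h₂pos m hm)
  have hprefactor : H m * σ m ^ 2 / (2 * L m * h₂ m) < 0 :=
    div_neg_of_pos_of_neg (by have := hHpos m hm; have := hσpos m hm; positivity) hdenominator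
  have hnumerator : γ * S' m * (R m * h₂ m - G m * h₂ m) < 0 := by
    rw [← sub_mul]
    exact mul_neg_of_pos_of_neg (mul_pos hγ (hS'pos m hm))
      (mul_neg_of_neg_of_pos (sub_neg.mpr hGR) (h₂pos m hm))
  have hA : Tendsto (fun p : ℝ × ℝ => H p.2 * σ p.1 ^ 2 / (2 * L p.1 * h₂ p.1)) (𝓝[S] (m, m))
      (𝓝 (H m * σ m ^ 2 / (2 * L m * h₂ m))) := ((lim₂ hHcont).mul ((lim₁ hσcont).pow 2)).div
    ((tendsto_const_nhds.mul (lim₁ hLcont)).mul (lim₁ h₂cont)) hdenominator.ne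
  have hN := ((tendsto_const_nhds (x := γ)).mul (lim₁ hS'cont)).mul
    (((lim₁ hRcont).mul (lim₂ h₂cont)).sub ((lim₂ hGcont).mul (lim₁ h₂cont)))
  have hC := ((lim₁ hR'cont).mul (lim₁ h₂cont)).sub ((lim₁ hRcont).mul (lim₁ h₂'cont))
  refine (hA.mul_div_add_atTop hprefactor hnumerator hN hDlim hC).congr' ?_
  filter_upwards [eventually_mem_nhdsWithin] with p ⟨hx, hm', hlt⟩
  rw [hE p.1 p.2 hx hm' hlt]
  ring

/-- explosion of the vector field at the diagonal, paper's Lemma 3: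
if `m ∈ ℐ` satisfies `L(m) < 0` and `G(m) > R(m)`, then `E(x,m') → +∞` as
`(x,m') → (m,m)` with `x < m'` in `ℐ`. -/
theorem stmt_9
    (α β : ℝ) (I : Set ℝ) (hI : I = Ioo α β)
    (h₁ h₂ h₂' σ S' H L R R' G : ℝ → ℝ) (γ : ℝ) (hγ : 0 < γ)
    (h₁cont : ContinuousOn h₁ I) (h₁mono : StrictMonoOn h₁ I)
    (h₁pos : ∀ x ∈ I, 0 < h₁ x)
    (h₂diff : ∀ x ∈ I, HasDerivAt h₂ (h₂' x) x) (h₂'cont : ContinuousOn h₂' I)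
    (h₂anti : StrictAntiOn h₂ I) (h₂pos : ∀ x ∈ I, 0 < h₂ x)
    (hσcont : ContinuousOn σ I) (hσpos : ∀ x ∈ I, 0 < σ x)
    (hS'cont : ContinuousOn S' I) (hS'pos : ∀ x ∈ I, 0 < S' x)
    (hHcont : ContinuousOn H I) (hHpos : ∀ x ∈ I, 0 < H x)
    (hLcont : ContinuousOn L I)
    (hRdiff : ∀ x ∈ I, HasDerivAt R (R' x) x) (hR'cont : ContinuousOn R' I)
    (hGcont : ContinuousOn G I)
    (D E : ℝ → ℝ → ℝ)
    (hD : ∀ x m', D x m' = h₁ m' * h₂ x - h₁ x * h₂ m')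
    (hE : ∀ x m', x ∈ I → m' ∈ I → x < m' →
      E x m' = (H m' * σ x ^ 2 / (2 * L x * h₂ x)) *
        ((γ * S' x / D x m') * (R x * h₂ m' - G m' * h₂ x) + R' x * h₂ x - R x * h₂' x))
    (m : ℝ) (hm : m ∈ I) (hLm : L m < 0) (hGR : R m < G m) :
    Tendsto (fun p : ℝ × ℝ => E p.1 p.2)
      (nhdsWithin (m, m) {p : ℝ × ℝ | p.1 ∈ I ∧ p.2 ∈ I ∧ p.1 < p.2})
      atTop :=
  stmt_9_general I h₁ h₂ h₂' σ S' H L R R' G γ hγ h₁cont h₁mono h₁pos h₂diff h₂'cont h₂anti h₂pos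
    hσcont hσpos hS'cont hS'pos hHcont hHpos hLcont hRdiff hR'cont hGcont D E hD hE m hm hLm hGR
end

section
/- Let ℐ be an open interval, h : ℐ → (0,∞) differentiable, strictly increasing, and convex, and let U₁, U₂ : ℐ → ℝ be differentiable with U₂(x) > U₁(x) and U₂'(x) > U₁'(x) for all x ∈ ℐ, and U₁ concave. Suppose x₁, x₂ ∈ ℐ satisfy, for i = 1,2, the optimality condition U_i(x_i)/h(x_i) ≥ U_i(y)/h(y) for all y ∈ ℐ and the smooth-fit condition U_i'(x_i) = (h'(x_i)/h(x_i))·U_i(x_i), and assume U₁(x₁) ≥ 0. Define V_i(x) = (h(x)/h(x_i))·U_i(x_i) for x < x_i and V_i(x) = U_i(x) for x ≥ x_i. Then V₂(x) > V₁(x) and V₂'(x) > V₁'(x) for every x ∈ ℐ. -/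
open Set

/-- Step 1 of the paper's Proposition 4: if `U₂` dominates `U₁` in both
absolute and marginal terms, then the corresponding threshold value functions satisfy
`V₂ > V₁` and `V₂' > V₁'` on the open interval `ℐ`. -/
theorem stmt_12
    (I : Set ℝ) (hIo : IsOpen I) (hIc : I.OrdConnected)
    (h h' U₁ U₂ U₁' U₂' : ℝ → ℝ)
    (hhpos : ∀ x ∈ I, 0 < h x)
    (hhd : ∀ x ∈ I, HasDerivAt h (h' x) x)
    (hhmono : StrictMonoOn h I)
    (hhconv : ConvexOn ℝ I h)
    (hU₁d : ∀ x ∈ I, HasDerivAt U₁ (U₁' x) x)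
    (hU₂d : ∀ x ∈ I, HasDerivAt U₂ (U₂' x) x)
    (hU21 : ∀ x ∈ I, U₁ x < U₂ x)
    (hU21' : ∀ x ∈ I, U₁' x < U₂' x)
    (hU₁conc : ConcaveOn ℝ I U₁)
    (x₁ x₂ : ℝ) (hx₁ : x₁ ∈ I) (hx₂ : x₂ ∈ I)
    (hopt₁ : ∀ y ∈ I, U₁ y / h y ≤ U₁ x₁ / h x₁)
    (hopt₂ : ∀ y ∈ I, U₂ y / h y ≤ U₂ x₂ / h x₂)
    (hsf₁ : U₁' x₁ = (h' x₁ / h x₁) * U₁ x₁)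
    (hsf₂ : U₂' x₂ = (h' x₂ / h x₂) * U₂ x₂)
    (hU₁nonneg : 0 ≤ U₁ x₁)
    (V₁ V₂ V₁' V₂' : ℝ → ℝ)
    (hV₁ : ∀ x, V₁ x = if x < x₁ then (h x / h x₁) * U₁ x₁ else U₁ x)
    (hV₂ : ∀ x, V₂ x = if x < x₂ then (h x / h x₂) * U₂ x₂ else U₂ x)
    (hV₁' : ∀ x, V₁' x = if x < x₁ then (h' x / h x₁) * U₁ x₁ else U₁' x)
    (hV₂' : ∀ x, V₂' x = if x < x₂ then (h' x / h x₂) * U₂ x₂ else U₂' x) :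
    ∀ x ∈ I, V₁ x < V₂ x ∧ V₁' x < V₂' x := by

  have hne₁ : h x₁ ≠ 0 := (hhpos x₁ hx₁).ne'
  have hne₂ : h x₂ ≠ 0 := (hhpos x₂ hx₂).ne'
  set c₁ := U₁ x₁ / h x₁ with hc₁def
  set c₂ := U₂ x₂ / h x₂ with hc₂def
  have hc₁0 : 0 ≤ c₁ := div_nonneg hU₁nonneg (hhpos x₁ hx₁).le
  have hc12 : c₁ < c₂ := by
    have h1 : c₁ < U₂ x₁ / h x₁ :=
      div_lt_div_of_pos_right (hU21 x₁ hx₁) (hhpos x₁ hx₁)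
    exact lt_of_lt_of_le h1 (hopt₂ x₁ hx₁)
  -- h' is monotone on I
  have hmono : ∀ a ∈ I, ∀ b ∈ I, a ≤ b → h' a ≤ h' b := by
    intro a ha b hb hab
    rcases eq_or_lt_of_le hab with rfl | hlt
    · exact le_rfl
    · exact (hhconv.le_slope_of_hasDerivAt ha hb hlt (hhd a ha)).trans
        (hhconv.slope_le_of_hasDerivAt ha hb hlt (hhd b hb))
  -- U₁' is antitone on I
  have hanti : ∀ a ∈ I, ∀ b ∈ I, a ≤ b → U₁' b ≤ U₁' a := by
    intro a ha b hb hab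
    rcases eq_or_lt_of_le hab with rfl | hlt
    · exact le_rfl
    · exact (hU₁conc.le_slope_of_hasDerivAt ha hb hlt (hU₁d b hb)).trans
        (hU₁conc.slope_le_of_hasDerivAt ha hb hlt (hU₁d a ha))
  -- h' is positive on I
  have hp : ∀ x ∈ I, 0 < h' x := by
    intro x hx
    obtain ⟨ε, hε, hball⟩ := Metric.isOpen_iff.mp hIo x hx
    have hyI : x - ε / 2 ∈ I := by
      apply hball
      rw [Metric.mem_ball, Real.dist_eq]
      have : x - ε / 2 - x = -(ε / 2) := by ring
      rw [this, abs_neg, abs_of_pos (by linarith)]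
      linarith
    have hlt : x - ε / 2 < x := by linarith
    have hslope := hhconv.slope_le_of_hasDerivAt hyI hx hlt (hhd x hx)
    rw [slope_def_field] at hslope
    have hnum : 0 < h x - h (x - ε / 2) := sub_pos.mpr (hhmono hyI hx hlt)
    have hden : 0 < x - (x - ε / 2) := by linarith
    exact lt_of_lt_of_le (div_pos hnum hden) hslope
  have hU1'x₁ : U₁' x₁ = c₁ * h' x₁ := by
    rw [hsf₁, hc₁def]; field_simp
  -- key inequality for x ∈ [x₂, x₁)
  have hkey : ∀ x ∈ I, x₂ ≤ x → x < x₁ → c₁ * h x < U₂ x := by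
    intro x hx hx2 hx1
    set e : ℝ → ℝ := fun t => U₂ t - c₁ * h t with he
    have hIcc : Icc x₂ x₁ ⊆ I := hIc.out hx₂ hx₁
    have hed : ∀ t ∈ I, HasDerivAt e (U₂' t - c₁ * h' t) t := fun t ht =>
      (hU₂d t ht).sub ((hhd t ht).const_mul c₁)
    have hmonoe : MonotoneOn e (Icc x₂ x₁) := by
      apply monotoneOn_of_deriv_nonneg (convex_Icc _ _)
      · intro t ht
        exact (hed t (hIcc ht)).continuousAt.continuousWithinAt
      · intro t ht
        rw [interior_Icc] at ht
        exact ((hed t (hIcc (Ioo_subset_Icc_self ht))).differentiableAt).differentiableWithinAt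
      · intro t ht
        rw [interior_Icc] at ht
        have htI : t ∈ I := hIcc (Ioo_subset_Icc_self ht)
        rw [(hed t htI).deriv]
        have h1 : U₁' x₁ ≤ U₁' t := hanti t htI x₁ hx₁ ht.2.le
        have h2 : c₁ * h' t ≤ c₁ * h' x₁ :=
          mul_le_mul_of_nonneg_left (hmono t htI x₁ hx₁ ht.2.le) hc₁0
        have h3 := hU21' t htI
        linarith [hU1'x₁]
    have hU₂x₂ : U₂ x₂ = c₂ * h x₂ := by rw [hc₂def]; field_simp
    have hex₂ : 0 < e x₂ := by
      have : e x₂ = (c₂ - c₁) * h x₂ := by simp only [he, hU₂x₂]; ring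
      rw [this]
      exact mul_pos (sub_pos.mpr hc12) (hhpos x₂ hx₂)
    have hle : e x₂ ≤ e x :=
      hmonoe ⟨le_refl x₂, le_of_lt (lt_of_le_of_lt hx2 hx1)⟩ ⟨hx2, hx1.le⟩ hx2
    have : 0 < U₂ x - c₁ * h x := lt_of_lt_of_le hex₂ hle
    linarith
  -- V₁ is dominated by c₁ * h on I
  have hV₁le : ∀ x ∈ I, V₁ x ≤ c₁ * h x := by
    intro x hx
    rw [hV₁]
    split_ifs with hlt
    · have : h x / h x₁ * U₁ x₁ = c₁ * h x := by rw [hc₁def]; field_simp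
      rw [this]
    · have hle := hopt₁ x hx
      have hxpos := hhpos x hx
      have : U₁ x = U₁ x / h x * h x := by field_simp
      rw [this]
      exact mul_le_mul_of_nonneg_right hle hxpos.le
  intro x hx
  have hxpos := hhpos x hx
  refine ⟨?_, ?_⟩
  · by_cases h2 : x < x₂
    · have hv2 : V₂ x = c₂ * h x := by
        rw [hV₂, if_pos h2, hc₂def]; field_simp
      have hle := hV₁le x hx
      have hlt := mul_lt_mul_of_pos_right hc12 hxpos
      rw [hv2]; linarith
    · have hv2 : V₂ x = U₂ x := by rw [hV₂, if_neg h2]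
      by_cases h1 : x < x₁
      · have hv1 : V₁ x = c₁ * h x := by
          rw [hV₁, if_pos h1, hc₁def]; field_simp
        rw [hv1, hv2]
        exact hkey x hx (not_lt.mp h2) h1
      · rw [hv2, hV₁, if_neg h1]
        exact hU21 x hx
  · by_cases h2 : x < x₂
    · have hv2 : V₂' x = c₂ * h' x := by
        rw [hV₂', if_pos h2, hc₂def]; field_simp
      by_cases h1 : x < x₁
      · have hv1 : V₁' x = c₁ * h' x := by
          rw [hV₁', if_pos h1, hc₁def]; field_simp
        rw [hv1, hv2]
        exact mul_lt_mul_of_pos_right hc12 (hp x hx)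
      · have hle : x₁ ≤ x := not_lt.mp h1
        have hv1 : V₁' x = U₁' x := by rw [hV₁', if_neg h1]
        rw [hv1, hv2]
        have m1 := mul_le_mul_of_nonneg_left (hmono x₁ hx₁ x hx hle) hc₁0
        have m2 := mul_lt_mul_of_pos_right hc12 (hp x hx)
        have m3 := hanti x₁ hx₁ x hx hle
        linarith [hU1'x₁]
    · have hv2 : V₂' x = U₂' x := by rw [hV₂', if_neg h2]
      by_cases h1 : x < x₁
      · have hv1 : V₁' x = c₁ * h' x := by
          rw [hV₁', if_pos h1, hc₁def]; field_simp
        rw [hv1, hv2]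
        have m1 := mul_le_mul_of_nonneg_left (hmono x hx x₁ hx₁ h1.le) hc₁0
        have m3 := hanti x hx x₁ hx₁ h1.le
        have m4 := hU21' x hx
        linarith [hU1'x₁]
      · rw [hv2, hV₁', if_neg h1]
        exact hU21' x hx
end

section
/- Let r > 0, σ > 0, μ < r, I > 0, and κ > 1 be reals, let β₁ > 1 be the positive root of (1/2)σ²β(β−1) + μβ − r = 0, and set x_R = (β₁/(β₁−1))·I and x_U = x_R/κ. Define P : (0,∞) → ℝ by P(x) = (1/2)[(κx_U − I)(x/x_U)^{β₁} − (x_R − I)(x/x_R)^{β₁}] for 0 < x < x_U, P(x) = (1/2)[κx − I − (x_R − I)(x/x_R)^{β₁}] for x_U ≤ x < x_R, and P(x) = (1/2)(κ−1)x for x ≥ x_R. Then P is continuous and strictly increasing on (0,∞), P(x) → 0 as x → 0⁺, and P(x) → ∞ as x → ∞; consequently P maps (0,∞) bijectively onto (0,∞). -/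
/-!
With `x_U = x_R / κ` one has `V_U x = V_R (κ x)`, so `P x = (V (κ x) - V x) / 2` for the single
value function `V = V_R`. Smooth pasting at `x_R` (the identity `β (x_R - I) = x_R`) makes `V`
differentiable everywhere, with derivative `min 1 ((x / x_R) ^ (β - 1))` on `x ≥ 0`: positive
and nondecreasing. Hence `P' x = (κ V' (κ x) - V' x) / 2 > 0`, while `P 0 = 0` and
`P x = (κ - 1) x / 2` beyond `x_R`; the intermediate value theorem does the rest.
-/

open Set Filter Topology

theorem hasDerivAt_ite_lt {g h : ℝ → ℝ} {g' h' a x : ℝ} (hg : HasDerivAt g g' x)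
    (hh : HasDerivAt h h' x) (hpaste : x = a → g x = h x ∧ g' = h') :
    HasDerivAt (fun y => if y < a then g y else h y) (if x < a then g' else h') x := by
  rcases lt_trichotomy x a with hx | rfl | hx
  · rw [if_pos hx]
    exact hg.congr_of_eventuallyEq <| eventually_of_mem (Iio_mem_nhds hx) fun y hy => if_pos hy
  · obtain ⟨hval, rfl⟩ := hpaste rfl
    rw [if_neg (lt_irrefl x)]
    have hleft : HasDerivWithinAt (fun y => if y < x then g y else h y) g' (Iic x) x :=
      hg.hasDerivWithinAt.congr
        (fun y hy => by
          rcases (mem_Iic.1 hy).lt_or_eq with hy | rfl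
          · exact if_pos hy
          · exact (if_neg (lt_irrefl y)).trans hval.symm)
        ((if_neg (lt_irrefl x)).trans hval.symm)
    have hright : HasDerivWithinAt (fun y => if y < x then g y else h y) g' (Ici x) x :=
      hh.hasDerivWithinAt.congr (fun y hy => if_neg (not_lt.2 hy)) (if_neg (lt_irrefl x))
    simpa only [Iic_union_Ici, hasDerivWithinAt_univ] using hleft.union hright
  · rw [if_neg (not_lt.2 hx.le)]
    exact hh.congr_of_eventuallyEq <|
      eventually_of_mem (Ioi_mem_nhds hx) fun y hy => if_neg (not_lt.2 (le_of_lt hy))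

theorem StrictMonoOn.bijOn_Ioi {α δ : Type*} [ConditionallyCompleteLinearOrder α]
    [TopologicalSpace α] [OrderTopology α] [DenselyOrdered α] [LinearOrder δ]
    [NoMaxOrder δ] [TopologicalSpace δ] [OrderClosedTopology δ] {f : α → δ} {a : α}
    (hmono : StrictMonoOn f (Ici a)) (hcont : ContinuousOn f (Ici a))
    (htop : Tendsto f atTop atTop) :
    BijOn f (Ioi a) (Ioi (f a)) := by
  refine ⟨fun x hx => hmono self_mem_Ici (le_of_lt hx) hx, hmono.injOn.mono Ioi_subset_Ici_self,
    fun y hy => ?_⟩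
  obtain ⟨b, hby, hab⟩ := ((htop.eventually_gt_atTop y).and (eventually_ge_atTop a)).exists
  obtain ⟨x, hx, rfl⟩ := intermediate_value_Ioo hab (hcont.mono Icc_subset_Ici_self) ⟨hy, hby⟩
  exact ⟨x, hx.1, rfl⟩

noncomputable section

-- `investThreshold β I` and `optionValue β I` are the paper's `x_R` and `V_R`.
def investThreshold (β I : ℝ) : ℝ := β / (β - 1) * I

def optionValue (β I x : ℝ) : ℝ :=
  if x < investThreshold β I then (x / investThreshold β I) ^ β * (investThreshold β I - I)
  else x - I

def optionValueDeriv (β I x : ℝ) : ℝ :=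
  if x < investThreshold β I then (x / investThreshold β I) ^ (β - 1) else 1

def bargainingShare (β I κ x : ℝ) : ℝ :=
  (1 / 2) * (optionValue β I (κ * x) - optionValue β I x)

end

section

variable {β I κ x : ℝ}

theorem investThreshold_pos (hβ : 1 < β) (hI : 0 < I) : 0 < investThreshold β I :=
  mul_pos (div_pos (by linarith) (by linarith)) hI

theorem mul_investThreshold_sub (hβ : 1 < β) :
    β * (investThreshold β I - I) = investThreshold β I := by
  have : β - 1 ≠ 0 := by linarith
  unfold investThreshold
  field_simp
  ring

theorem optionValue_of_le (hx : investThreshold β I ≤ x) : optionValue β I x = x - I :=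
  if_neg (not_lt.2 hx)

theorem hasDerivAt_optionValue (hβ : 1 < β) (hI : 0 < I) (x : ℝ) :
    HasDerivAt (optionValue β I) (optionValueDeriv β I x) x := by
  have ha := investThreshold_pos hβ hI
  have hpaste := mul_investThreshold_sub (I := I) hβ
  unfold optionValue optionValueDeriv
  generalize investThreshold β I = a at *
  have hlow : HasDerivAt (fun y => (y / a) ^ β * (a - I)) ((x / a) ^ (β - 1)) x := by
    refine (((Real.hasDerivAt_rpow_const (Or.inr hβ.le)).comp x
      ((hasDerivAt_id x).div_const a)).mul_const (a - I)).congr_deriv ?_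
    calc β * (x / a) ^ (β - 1) * (1 / a) * (a - I) = (x / a) ^ (β - 1) * (β * (a - I) / a) := by
          ring
      _ = (x / a) ^ (β - 1) := by rw [hpaste, div_self ha.ne', mul_one]
  refine hasDerivAt_ite_lt hlow ((hasDerivAt_id x).sub_const I) fun hx => ?_
  simp only [hx, div_self ha.ne', Real.one_rpow, one_mul, and_self]

theorem optionValueDeriv_pos (hβ : 1 < β) (hI : 0 < I) (hx : 0 < x) :
    0 < optionValueDeriv β I x := by
  unfold optionValueDeriv
  split_ifs
  · exact Real.rpow_pos_of_pos (div_pos hx (investThreshold_pos hβ hI)) _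
  · exact one_pos

theorem monotoneOn_optionValueDeriv (hβ : 1 < β) (hI : 0 < I) :
    MonotoneOn (optionValueDeriv β I) (Ici 0) := by
  have ha := investThreshold_pos hβ hI
  intro x hx y hy hxy
  unfold optionValueDeriv
  split_ifs with hxa hya hya
  · exact Real.rpow_le_rpow (div_nonneg hx ha.le) (div_le_div_of_nonneg_right hxy ha.le)
      (by linarith)
  · exact Real.rpow_le_one (div_nonneg hx ha.le) ((div_le_one ha).2 hxa.le) (by linarith)
  · exact absurd (hxy.trans_lt hya) hxa
  · exact le_rfl

theorem hasDerivAt_bargainingShare (hβ : 1 < β) (hI : 0 < I) (κ x : ℝ) :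
    HasDerivAt (bargainingShare β I κ)
      ((1 / 2) * (κ * optionValueDeriv β I (κ * x) - optionValueDeriv β I x)) x := by
  refine ((((hasDerivAt_optionValue hβ hI (κ * x)).comp x ((hasDerivAt_id x).const_mul κ)).sub
    (hasDerivAt_optionValue hβ hI x)).const_mul (1 / 2)).congr_deriv ?_
  ring

theorem continuous_bargainingShare (hβ : 1 < β) (hI : 0 < I) :
    Continuous (bargainingShare β I κ) :=
  continuous_iff_continuousAt.2 fun x => (hasDerivAt_bargainingShare hβ hI κ x).continuousAt

theorem bargainingShare_zero : bargainingShare β I κ 0 = 0 := by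
  simp [bargainingShare]

theorem strictMonoOn_bargainingShare (hβ : 1 < β) (hI : 0 < I) (hκ : 1 < κ) :
    StrictMonoOn (bargainingShare β I κ) (Ici 0) := by
  refine strictMonoOn_of_deriv_pos (convex_Ici 0) (continuous_bargainingShare hβ hI).continuousOn
    fun x hx => ?_
  rw [interior_Ici, mem_Ioi] at hx
  rw [(hasDerivAt_bargainingShare hβ hI κ x).deriv]
  have hκx : 0 < κ * x := mul_pos (by linarith) hx
  have hpos : 0 < optionValueDeriv β I (κ * x) := optionValueDeriv_pos hβ hI hκx
  have hmono : optionValueDeriv β I x ≤ optionValueDeriv β I (κ * x) :=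
    monotoneOn_optionValueDeriv hβ hI (mem_Ici.2 hx.le) (mem_Ici.2 hκx.le)
      (le_mul_of_one_le_left hx.le hκ.le)
  nlinarith

theorem bargainingShare_of_le (hβ : 1 < β) (hI : 0 < I) (hκ : 1 < κ)
    (hx : investThreshold β I ≤ x) : bargainingShare β I κ x = (1 / 2) * (κ - 1) * x := by
  have hκx : investThreshold β I ≤ κ * x :=
    hx.trans (le_mul_of_one_le_left ((investThreshold_pos hβ hI).le.trans hx) hκ.le)
  rw [bargainingShare, optionValue_of_le hx, optionValue_of_le hκx]
  ring

theorem tendsto_bargainingShare_atTop (hβ : 1 < β) (hI : 0 < I) (hκ : 1 < κ) :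
    Tendsto (bargainingShare β I κ) atTop atTop := by
  refine (tendsto_id.const_mul_atTop (by linarith : (0 : ℝ) < 1 / 2 * (κ - 1))).congr' ?_
  filter_upwards [eventually_ge_atTop (investThreshold β I)] with x hx
  exact (bargainingShare_of_le hβ hI hκ hx).symm

theorem bargainingShare_eq_ite (hβ : 1 < β) (hI : 0 < I) (hκ : 1 < κ) {xR xU : ℝ}
    (hxR : xR = investThreshold β I) (hxU : xU = xR / κ) :
    bargainingShare β I κ x =
      if x < xU then
        (1 / 2) * ((κ * xU - I) * (x / xU) ^ β - (xR - I) * (x / xR) ^ β)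
      else if x < xR then
        (1 / 2) * (κ * x - I - (xR - I) * (x / xR) ^ β)
      else (1 / 2) * (κ - 1) * x := by
  have hκ0 : 0 < κ := by linarith
  have hxR0 : 0 < xR := hxR ▸ investThreshold_pos hβ hI
  have hκxU : κ * xU = xR := by rw [hxU]; field_simp
  rcases lt_or_ge (κ * x) xR with hκx | hκx
  · have hx : x < xR := by nlinarith
    have hxU' : x < xU := by rw [hxU, lt_div_iff₀ hκ0]; linarith
    rw [if_pos hxU', bargainingShare, optionValue, optionValue, ← hxR, if_pos hκx, if_pos hx,
      hκxU, show x / xU = κ * x / xR by rw [← hκxU]; field_simp]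
    ring
  · rw [if_neg (by rw [hxU, lt_div_iff₀ hκ0]; linarith), bargainingShare,
      optionValue_of_le (hxR ▸ hκx)]
    rcases lt_or_ge x xR with hx | hx
    · rw [if_pos hx, optionValue, ← hxR, if_pos hx]
      ring
    · rw [if_neg (not_lt.2 hx), optionValue_of_le (hxR ▸ hx)]
      ring

end

theorem stmt_15_general
    (I κ : ℝ) (hI : 0 < I) (hκ : 1 < κ)
    (β₁ : ℝ) (hβ : 1 < β₁)
    (xR xU : ℝ) (hxR : xR = (β₁ / (β₁ - 1)) * I) (hxU : xU = xR / κ)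
    (P : ℝ → ℝ)
    (hP : ∀ x : ℝ, 0 < x → P x =
      if x < xU then
        (1 / 2) * ((κ * xU - I) * (x / xU) ^ β₁ - (xR - I) * (x / xR) ^ β₁)
      else if x < xR then
        (1 / 2) * (κ * x - I - (xR - I) * (x / xR) ^ β₁)
      else (1 / 2) * (κ - 1) * x) :
    ContinuousOn P (Ioi 0) ∧ StrictMonoOn P (Ioi 0) ∧
      Tendsto P (nhdsWithin 0 (Ioi 0)) (nhds 0) ∧
      Tendsto P atTop atTop ∧
      Set.BijOn P (Ioi 0) (Ioi 0) := by
  have hPQ : EqOn (bargainingShare β₁ I κ) P (Ioi 0) := fun x hx =>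
    (bargainingShare_eq_ite hβ hI hκ hxR hxU).trans (hP x hx).symm
  have hcont := continuous_bargainingShare (κ := κ) hβ hI
  have hmono := strictMonoOn_bargainingShare hβ hI hκ
  have htop := tendsto_bargainingShare_atTop hβ hI hκ
  refine ⟨hcont.continuousOn.congr hPQ.symm, (hmono.mono Ioi_subset_Ici_self).congr hPQ,
    ?_, htop.congr' (eventually_of_mem (Ioi_mem_atTop 0) hPQ), ?_⟩
  · have h0 := hcont.tendsto 0
    rw [bargainingShare_zero] at h0
    exact (h0.mono_left nhdsWithin_le_nhds).congr' (eventuallyEq_nhdsWithin_of_eqOn hPQ)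
  · simpa only [bargainingShare_zero] using
      (hmono.bijOn_Ioi hcont.continuousOn htop).congr hPQ

/-- the developer's bargaining share `P = (1/2)(V_U − V_R)` in the geometric
Brownian motion specification is continuous and strictly increasing on `(0,∞)`, tends to `0`
at `0⁺` and to `∞` at `∞`, and maps `(0,∞)` bijectively onto `(0,∞)`. -/
theorem stmt_15
    (r σ μ I κ : ℝ) (hr : 0 < r) (hσ : 0 < σ) (hμ : μ < r) (hI : 0 < I) (hκ : 1 < κ)
    (β₁ : ℝ) (hβ : 1 < β₁)
    (hroot : (1 / 2) * σ ^ 2 * β₁ * (β₁ - 1) + μ * β₁ - r = 0)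
    (xR xU : ℝ) (hxR : xR = (β₁ / (β₁ - 1)) * I) (hxU : xU = xR / κ)
    (P : ℝ → ℝ)
    (hP : ∀ x : ℝ, 0 < x → P x =
      if x < xU then
        (1 / 2) * ((κ * xU - I) * (x / xU) ^ β₁ - (xR - I) * (x / xR) ^ β₁)
      else if x < xR then
        (1 / 2) * (κ * x - I - (xR - I) * (x / xR) ^ β₁)
      else (1 / 2) * (κ - 1) * x) :
    ContinuousOn P (Ioi 0) ∧ StrictMonoOn P (Ioi 0) ∧
      Tendsto P (nhdsWithin 0 (Ioi 0)) (nhds 0) ∧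
      Tendsto P atTop atTop ∧
      Set.BijOn P (Ioi 0) (Ioi 0) :=
  stmt_15_general I κ hI hκ β₁ hβ xR xU hxR hxU P hP
end
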